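/- For strings u over alphabet A and v over alphabet B with A ∩ B = ∅, a string w belongs to u & v if and only if the projection of w onto A equals u, the projection of w onto B equals v, and every symbol of w lies in A ∪ B. -/

import Mathlib

/-!
Reading a word `w` from the left, its first letter must be the first letter of `u` or of `v`,
so membership in `u & v` can be peeled off letter by letter. This shows that a shuffle is a
permutation of `u ++ v` and that filtering commutes with shuffling; conversely every word is a
shuffle of its two projections onto complementary predicates. Disjointness of the alphabets makes
the projection onto `B` the complementary projection of the one onto `A`.
-/

/-- The shuffle (interleaving) of two strings, as a set of strings. -/
def shuffle {α : Type*} : List α → List α → Set (List α)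
  | [], v => {v}
  | u, [] => {u}
  | a :: u', b :: v' =>
      (fun w => a :: w) '' shuffle u' (b :: v') ∪ (fun w => b :: w) '' shuffle (a :: u') v'
  termination_by u v => u.length + v.length

section Shuffle

variable {α : Type*} {a : α} {u v w : List α}

theorem shuffle_nil_left (v : List α) : shuffle [] v = {v} := by
  rw [shuffle]

theorem shuffle_nil_right (u : List α) : shuffle u [] = {u} := by
  cases u with
  | nil => rw [shuffle]
  | cons a u => rw [shuffle]; simp

theorem cons_mem_shuffle_cons_left (h : w ∈ shuffle u v) : a :: w ∈ shuffle (a :: u) v := by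
  cases v with
  | nil =>
    rw [shuffle_nil_right] at h ⊢
    rw [Set.mem_singleton_iff.mp h]
    rfl
  | cons b v => rw [shuffle]; exact Or.inl ⟨w, h, rfl⟩

theorem cons_mem_shuffle_cons_right (h : w ∈ shuffle u v) : a :: w ∈ shuffle u (a :: v) := by
  cases u with
  | nil =>
    rw [shuffle_nil_left] at h ⊢
    rw [Set.mem_singleton_iff.mp h]
    rfl
  | cons b u => rw [shuffle]; exact Or.inr ⟨w, h, rfl⟩

theorem eq_nil_of_nil_mem_shuffle (h : [] ∈ shuffle u v) : u = [] ∧ v = [] := by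
  match u, v with
  | [], v => simpa [shuffle_nil_left, eq_comm] using h
  | a :: u, [] => simp [shuffle_nil_right] at h
  | a :: u, b :: v => simp [shuffle] at h

theorem mem_shuffle_of_cons_mem_shuffle (h : a :: w ∈ shuffle u v) :
    (∃ u', u = a :: u' ∧ w ∈ shuffle u' v) ∨ (∃ v', v = a :: v' ∧ w ∈ shuffle u v') := by
  match u, v with
  | [], v =>
    rw [shuffle_nil_left, Set.mem_singleton_iff] at h
    exact Or.inr ⟨w, h.symm, by rw [shuffle_nil_left]; rfl⟩
  | b :: u, [] =>
    rw [shuffle_nil_right, Set.mem_singleton_iff] at h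
    exact Or.inl ⟨w, h.symm, by rw [shuffle_nil_right]; rfl⟩
  | b :: u, c :: v =>
    rw [shuffle] at h
    rcases h with ⟨w', hw', hcons⟩ | ⟨w', hw', hcons⟩
    · obtain ⟨rfl, rfl⟩ := List.cons.inj hcons
      exact Or.inl ⟨u, rfl, hw'⟩
    · obtain ⟨rfl, rfl⟩ := List.cons.inj hcons
      exact Or.inr ⟨v, rfl, hw'⟩

theorem perm_append_of_mem_shuffle (h : w ∈ shuffle u v) : w.Perm (u ++ v) := by
  induction w generalizing u v with
  | nil => obtain ⟨rfl, rfl⟩ := eq_nil_of_nil_mem_shuffle h; rfl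
  | cons c w ih =>
    rcases mem_shuffle_of_cons_mem_shuffle h with ⟨u', rfl, hw⟩ | ⟨v', rfl, hw⟩
    · exact (ih hw).cons c
    · exact ((ih hw).cons c).trans List.perm_middle.symm

theorem filter_mem_shuffle (p : α → Bool) (h : w ∈ shuffle u v) :
    w.filter p ∈ shuffle (u.filter p) (v.filter p) := by
  induction w generalizing u v with
  | nil =>
    obtain ⟨rfl, rfl⟩ := eq_nil_of_nil_mem_shuffle h
    simpa using h
  | cons c w ih =>
    rcases mem_shuffle_of_cons_mem_shuffle h with ⟨u', rfl, hw⟩ | ⟨v', rfl, hw⟩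
    · by_cases hc : p c
      · simpa [List.filter_cons, hc] using cons_mem_shuffle_cons_left (ih hw)
      · simpa [List.filter_cons, hc] using ih hw
    · by_cases hc : p c
      · simpa [List.filter_cons, hc] using cons_mem_shuffle_cons_right (ih hw)
      · simpa [List.filter_cons, hc] using ih hw

theorem filter_eq_left_of_mem_shuffle {p : α → Bool} (h : w ∈ shuffle u v)
    (hu : ∀ x ∈ u, p x) (hv : ∀ x ∈ v, ¬p x) : w.filter p = u := by
  simpa [List.filter_eq_self.mpr hu, List.filter_eq_nil_iff.mpr hv, shuffle_nil_right]
    using filter_mem_shuffle p h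

theorem filter_eq_right_of_mem_shuffle {p : α → Bool} (h : w ∈ shuffle u v)
    (hu : ∀ x ∈ u, ¬p x) (hv : ∀ x ∈ v, p x) : w.filter p = v := by
  simpa [List.filter_eq_nil_iff.mpr hu, List.filter_eq_self.mpr hv, shuffle_nil_left]
    using filter_mem_shuffle p h

theorem mem_shuffle_filter_filter_not (p : α → Bool) (w : List α) :
    w ∈ shuffle (w.filter p) (w.filter (fun x => !p x)) := by
  induction w with
  | nil => simp [shuffle_nil_left]
  | cons c w ih =>
    by_cases hc : p c
    · simpa [List.filter_cons, hc] using cons_mem_shuffle_cons_left ih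
    · simpa [List.filter_cons, hc] using cons_mem_shuffle_cons_right ih

end Shuffle

theorem stmt_16 {α : Type*} [DecidableEq α] (A B : Finset α) (hAB : Disjoint A B)
    (u v : List α) (hu : ∀ x ∈ u, x ∈ A) (hv : ∀ x ∈ v, x ∈ B) (w : List α) :
    w ∈ shuffle u v ↔
      w.filter (· ∈ A) = u ∧ w.filter (· ∈ B) = v ∧ ∀ x ∈ w, x ∈ A ∪ B := by
  constructor
  · intro hw
    have hwA : w.filter (· ∈ A) = u := filter_eq_left_of_mem_shuffle hw (by simpa using hu)
      (by simpa using fun x hx => hAB.notMem_of_mem_right_finset (hv x hx))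
    have hwB : w.filter (· ∈ B) = v := filter_eq_right_of_mem_shuffle hw
      (by simpa using fun x hx => hAB.notMem_of_mem_left_finset (hu x hx)) (by simpa using hv)
    refine ⟨hwA, hwB, fun x hx => ?_⟩
    rcases List.mem_append.mp ((perm_append_of_mem_shuffle hw).subset hx) with hxu | hxv
    · exact Finset.mem_union_left B (hu x hxu)
    · exact Finset.mem_union_right A (hv x hxv)
  · rintro ⟨hwA, hwB, hw⟩
    have hB_compl : w.filter (· ∈ B) = w.filter (fun x => !decide (x ∈ A)) := by
      refine List.filter_congr fun x hx => ?_
      rcases Finset.mem_union.mp (hw x hx) with hxA | hxB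
      · simp [hxA, hAB.notMem_of_mem_left_finset hxA]
      · simp [hxB, hAB.notMem_of_mem_right_finset hxB]
    rw [← hwA, ← hwB, hB_compl]
    exact mem_shuffle_filter_filter_not _ w
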